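/- Let Ȧ = ℂ[t₁^{±1},...,t_m^{±1}], k̇ = Der(Ȧ), and let (M, φ, φ̂, ψ) be a quasi-Poisson module over (Ȧ, k̇). Then for every r = (r₁,...,r_m) ∈ ℤ^m and a ∈ Ȧ: ψ_{t^r a} = φ_{t^r} ψ_a + Σ_{j=1}^m φ_{a·d_j(t^r)} (φ_{t_j^{-1}} ψ_{t_j} − ψ₁), where d_j = t_j d/dt_j so d_j(t^r) = r_j t^r. -/

import Mathlib

/-- `Ȧ = ℂ[t₁^{±1},…,t_m^{±1}]`. -/
abbrev LaurentDot (m : ℕ) : Type := AddMonoidAlgebra ℂ (Fin m →₀ ℤ)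

/-- Monomials `t^r` of `Ȧ`. -/
noncomputable def tm (m : ℕ) (r : Fin m →₀ ℤ) : LaurentDot m :=
  AddMonoidAlgebra.single r 1

/-- The commutative product on `g = Ȧ ⊕ Der(Ȧ)`. -/
noncomputable def qpMul {m : ℕ}
    (x y : LaurentDot m × Derivation ℂ (LaurentDot m) (LaurentDot m)) :
    LaurentDot m × Derivation ℂ (LaurentDot m) (LaurentDot m) :=
  (x.1 * y.1, x.1 • y.2 + y.1 • x.2)

/-- The bracket `{a⊕δ, b⊕σ} = (δ(b) − σ(a)) ⊕ [δ,σ]` on `g = Ȧ ⊕ Der(Ȧ)`. -/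
noncomputable def qpBracket {m : ℕ}
    (x y : LaurentDot m × Derivation ℂ (LaurentDot m) (LaurentDot m)) :
    LaurentDot m × Derivation ℂ (LaurentDot m) (LaurentDot m) :=
  (x.2 y.1 - y.2 x.1, ⁅x.2, y.2⁆)

/-!
Put `D a = ψ_a − φ_a ψ₁`. Axioms (4), (6) and (7) give the product rule
`ψ_{ab} = φ_a ψ_b + φ_b ψ_a − φ_{ab} ψ₁`, which says precisely that `D` is a derivation along `φ`:
`D(ab) = φ_a D b + φ_b D a`. Consequently the logarithmic derivative `r ↦ φ_{t^{-r}} D(t^r)` is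
additive on `ℤ^m`, so `D(t^r) = φ_{t^r} ∑ⱼ rⱼ φ_{tⱼ⁻¹} D(tⱼ)`, and the product rule
`ψ_{t^r a} = φ_{t^r} ψ_a + φ_a D(t^r)` yields the formula.
-/

open AddMonoidAlgebra

def IsDerivationAlong {A E : Type*} [CommRing A] [Ring E] (φ : A →+* E) (D : A → E) : Prop :=
  ∀ a b, D (a * b) = φ a * D b + φ b * D a

theorem AddMonoidHom.apply_eq_sum_zsmul_single {ι E : Type*} [Fintype ι] [AddCommGroup E]
    (f : (ι →₀ ℤ) →+ E) (r : ι →₀ ℤ) :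
    f r = ∑ j, r j • f (Finsupp.single j 1) := by
  conv_lhs => rw [← Finsupp.univ_sum_single r]
  rw [map_sum]
  exact Finset.sum_congr rfl fun j _ => by rw [← map_zsmul, Finsupp.smul_single_one]

theorem RingHom.map_single_neg_mul_map_single {k G E : Type*} [CommRing k] [AddCommGroup G]
    [Ring E] (φ : k[G] →+* E) (r s : G) :
    φ (single (-r) 1) * φ (single s 1) = φ (single (s - r) 1) := by
  rw [← map_mul, single_mul_single, mul_one, neg_add_eq_sub]

namespace IsDerivationAlong

theorem logDeriv_single_add {k G E : Type*} [CommRing k] [AddCommGroup G] [Ring E]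
    {φ : k[G] →+* E} {D : k[G] → E} (hD : IsDerivationAlong φ D) (r s : G) :
    φ (single (-(r + s)) 1) * D (single (r + s) 1) =
      φ (single (-r) 1) * D (single r 1) + φ (single (-s) 1) * D (single s 1) := by
  have hsplit : single (r + s) (1 : k) = single r 1 * single s 1 := by
    rw [single_mul_single, mul_one]
  rw [hsplit, hD, mul_add, ← mul_assoc, ← mul_assoc, φ.map_single_neg_mul_map_single,
    φ.map_single_neg_mul_map_single, add_comm]
  congr 4 <;> abel

theorem map_single_eq_sum {k ι E : Type*} [CommRing k] [Fintype ι] [Ring E]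
    {φ : k[ι →₀ ℤ] →+* E} {D : k[ι →₀ ℤ] → E} (hD : IsDerivationAlong φ D) (r : ι →₀ ℤ) :
    D (single r 1) = φ (single r 1) *
      ∑ j, r j • (φ (single (-Finsupp.single j 1) 1) * D (single (Finsupp.single j 1) 1)) := by
  let logDeriv : (ι →₀ ℤ) →+ E :=
    AddMonoidHom.mk' (fun r => φ (single (-r) 1) * D (single r 1)) hD.logDeriv_single_add
  have hunit : φ (single r 1) * φ (single (-r) 1) = 1 := by
    rw [← map_mul, single_mul_single, add_neg_cancel, mul_one, ← one_def, map_one]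
  calc D (single r 1) = φ (single r 1) * logDeriv r := by
        rw [AddMonoidHom.mk'_apply, ← mul_assoc, hunit, one_mul]
    _ = _ := by rw [logDeriv.apply_eq_sum_zsmul_single]; rfl

end IsDerivationAlong

section QuasiPoisson

variable {m : ℕ} {M : Type*} [AddCommGroup M] [Module ℂ M] {φ : LaurentDot m →ₐ[ℂ] Module.End ℂ M}
  {ψ φh : (LaurentDot m × Derivation ℂ (LaurentDot m) (LaurentDot m)) →ₗ[ℂ] Module.End ℂ M}

theorem qp_lie_phiHat_psi_inl
    (h6 : ∀ x y, ⁅φh x, ψ y⁆ = φh (qpBracket x y) - φ y.1 * ψ x + ψ (qpMul x (y.1, 0)))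
    (a b : LaurentDot m) :
    ⁅φh (a, 0), ψ (b, 0)⁆ = ψ (a * b, 0) - φ b * ψ (a, 0) := by
  rw [h6]
  simp [qpBracket, qpMul, sub_eq_neg_add, Prod.mk_zero_zero]

theorem qp_psi_mul
    (h4 : ∀ (a : LaurentDot m) (x), φh (qpMul (a, 0) x) = φ a * φh x)
    (h6 : ∀ x y, ⁅φh x, ψ y⁆ = φh (qpBracket x y) - φ y.1 * ψ x + ψ (qpMul x (y.1, 0)))
    (h7 : ∀ x (a : LaurentDot m), ⁅ψ x, φ a⁆ = φ (x.2 a)) (a b : LaurentDot m) :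
    ψ (a * b, 0) = φ a * ψ (b, 0) + φ b * ψ (a, 0) - φ (a * b) * ψ (1, 0) := by
  have hcomm : φ a * ψ (b, 0) = ψ (b, 0) * φ a := by
    refine (sub_eq_zero.mp ?_).symm
    simpa [Ring.lie_def] using h7 (b, 0) a
  have hφh : φh (a, 0) = φ a * φh (1, 0) := by
    simpa [qpMul] using h4 a (1, 0)
  have hlie : ⁅φh (a, 0), ψ (b, 0)⁆ = φ a * ⁅φh (1, 0), ψ (b, 0)⁆ := by
    rw [hφh, Ring.lie_def, Ring.lie_def, mul_sub, ← mul_assoc, ← mul_assoc, ← mul_assoc, hcomm]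
  rw [qp_lie_phiHat_psi_inl h6, qp_lie_phiHat_psi_inl h6, one_mul, mul_sub,
    ← mul_assoc, ← map_mul] at hlie
  rw [sub_eq_iff_eq_add.mp hlie]
  abel

theorem qp_isDerivationAlong
    (h4 : ∀ (a : LaurentDot m) (x), φh (qpMul (a, 0) x) = φ a * φh x)
    (h6 : ∀ x y, ⁅φh x, ψ y⁆ = φh (qpBracket x y) - φ y.1 * ψ x + ψ (qpMul x (y.1, 0)))
    (h7 : ∀ x (a : LaurentDot m), ⁅ψ x, φ a⁆ = φ (x.2 a)) :
    IsDerivationAlong (φ : LaurentDot m →+* Module.End ℂ M) fun a => ψ (a, 0) - φ a * ψ (1, 0) := by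
  intro a b
  simp only [RingHom.coe_coe, qp_psi_mul h4 h6 h7, mul_sub, ← mul_assoc, ← map_mul, mul_comm b a]
  abel

end QuasiPoisson

theorem qp_psi_monomial_mul_general (m : ℕ)
    (M : Type*) [AddCommGroup M] [Module ℂ M]
    (φ : LaurentDot m →ₐ[ℂ] Module.End ℂ M)
    (ψ : (LaurentDot m × Derivation ℂ (LaurentDot m) (LaurentDot m)) →ₗ[ℂ] Module.End ℂ M)
    (φh : (LaurentDot m × Derivation ℂ (LaurentDot m) (LaurentDot m)) →ₗ[ℂ] Module.End ℂ M)
    (h4 : ∀ (a : LaurentDot m) (x), φh (qpMul (a, 0) x) = φ a * φh x)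
    (h6 : ∀ x y, ⁅φh x, ψ y⁆ = φh (qpBracket x y) - φ y.1 * ψ x + ψ (qpMul x (y.1, 0)))
    (h7 : ∀ x (a : LaurentDot m), ⁅ψ x, φ a⁆ = φ (x.2 a)) :
    ∀ (r : Fin m →₀ ℤ) (a : LaurentDot m),
      ψ (tm m r * a, 0) =
        φ (tm m r) * ψ (a, 0) +
          ∑ j : Fin m, (r j) •
            (φ (a * tm m r) *
              (φ (tm m (Finsupp.single j (-1))) * ψ (tm m (Finsupp.single j 1), 0)
                - ψ (1, 0))) := by
  intro r a
  have hD := qp_isDerivationAlong h4 h6 h7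
  have hψ_mul : ψ (tm m r * a, 0) =
      φ (tm m r) * ψ (a, 0) + φ a * (ψ (tm m r, 0) - φ (tm m r) * ψ (1, 0)) := by
    rw [qp_psi_mul h4 h6 h7, mul_sub, ← mul_assoc, ← map_mul, mul_comm a]
    abel
  have hlog : ∀ j : Fin m, φ (single (-Finsupp.single j 1) 1) *
      (ψ (single (Finsupp.single j 1) 1, 0) - φ (single (Finsupp.single j 1) 1) * ψ (1, 0)) =
      φ (tm m (Finsupp.single j (-1))) * ψ (tm m (Finsupp.single j 1), 0) - ψ (1, 0) := by
    intro j
    rw [mul_sub, ← mul_assoc, ← map_mul, single_mul_single, neg_add_cancel, mul_one, ← one_def,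
      map_one, one_mul, ← Finsupp.single_neg]
    rfl
  rw [hψ_mul, tm, hD.map_single_eq_sum r]
  simp only [RingHom.coe_coe, hlog, Finset.mul_sum, mul_smul_comm, ← mul_assoc, ← map_mul, tm]

/-- For a quasi-Poisson module `(M, φ, φ̂, ψ)` over `(Ȧ, Der Ȧ)` with
`Ȧ = ℂ[t₁^{±1},…,t_m^{±1}]`: for every `r ∈ ℤ^m` and `a ∈ Ȧ`,
`ψ_{t^r a} = φ_{t^r} ψ_a + Σ_j φ_{a·d_j(t^r)} (φ_{t_j⁻¹} ψ_{t_j} − ψ₁)`,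
where `d_j(t^r) = r_j t^r`. -/
theorem qp_psi_monomial_mul (m : ℕ)
    (M : Type*) [AddCommGroup M] [Module ℂ M]
    (φ : LaurentDot m →ₐ[ℂ] Module.End ℂ M)
    (ψ : (LaurentDot m × Derivation ℂ (LaurentDot m) (LaurentDot m)) →ₗ[ℂ] Module.End ℂ M)
    (φh : (LaurentDot m × Derivation ℂ (LaurentDot m) (LaurentDot m)) →ₗ[ℂ] Module.End ℂ M)
    (hψ : ∀ x y, ψ (qpBracket x y) = ⁅ψ x, ψ y⁆)
    (h3 : ∀ x y, ⁅φh x, φh y⁆ = φh (qpMul x (y.1, 0)) - φh (qpMul (x.1, 0) y))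
    (h4 : ∀ (a : LaurentDot m) (x), φh (qpMul (a, 0) x) = φ a * φh x)
    (h5 : ∀ x (a : LaurentDot m), ⁅φh x, φ a⁆ = 0)
    (h6 : ∀ x y, ⁅φh x, ψ y⁆ = φh (qpBracket x y) - φ y.1 * ψ x + ψ (qpMul x (y.1, 0)))
    (h7 : ∀ x (a : LaurentDot m), ⁅ψ x, φ a⁆ = φ (x.2 a)) :
    ∀ (r : Fin m →₀ ℤ) (a : LaurentDot m),
      ψ (tm m r * a, 0) =
        φ (tm m r) * ψ (a, 0) +
          ∑ j : Fin m, (r j) •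
            (φ (a * tm m r) *
              (φ (tm m (Finsupp.single j (-1))) * ψ (tm m (Finsupp.single j 1), 0)
                - ψ (1, 0))) :=
  qp_psi_monomial_mul_general m M φ ψ φh h4 h6 h7
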